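/- arXiv:1612.09198 — 2 statements merged into one kernel-verified Lean document; each statement's English description precedes it below -/
import Mathlib

section
/- Let β>2, r>0, τ_D>0, λ_D>0, a_B>0, a_D>0 and δ∈(0,1). Set C := r²·Γ(1−2/β)·τ_D^{2/β}, and define the device spatial throughput D(p) := p·λ_D·exp(−(a_B + p·a_D)·C) for p ∈ ℝ. Set p₁* := 1/(a_D·C), p₂* := (a_B/a_D)·(1/δ − 1), and p* := min{1, p₁*, p₂*}. Then p* satisfies 0 ≤ p* ≤ 1 and a_B/(a_B + p*·a_D) ≥ δ, and for every p with 0 ≤ p ≤ 1 and a_B/(a_B + p·a_D) ≥ δ, one has D(p) ≤ D(p*). (Main theorem: the optimal fraction of active devices maximizing the device spatial throughput under the downlink-degradation constraint is min{1, p₁*, p₂*}.) -/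
open Real

lemma f_inc (c x y : ℝ) (hc : 0 < c) (hx : 0 ≤ x) (hxy : x ≤ y) (hy : y ≤ 1 / c) :
    x * Real.exp (-(c * x)) ≤ y * Real.exp (-(c * y)) := by
  have hy0 : 0 ≤ y := hx.trans hxy
  have hcy : c * y ≤ 1 := by
    have := (le_div_iff₀ hc).1 hy; nlinarith
  have hexp := Real.add_one_le_exp (-(c * (y - x)))
  have h1 : x ≤ y * Real.exp (-(c * (y - x))) := by
    have h2 : y * (-(c * (y - x)) + 1) ≤ y * Real.exp (-(c * (y - x))) :=
      mul_le_mul_of_nonneg_left hexp hy0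
    nlinarith
  calc x * Real.exp (-(c * x)) ≤ (y * Real.exp (-(c * (y - x)))) * Real.exp (-(c * x)) :=
        mul_le_mul_of_nonneg_right h1 (Real.exp_pos _).le
    _ = y * (Real.exp (-(c * (y - x))) * Real.exp (-(c * x))) := by ring
    _ = y * Real.exp (-(c * y)) := by rw [← Real.exp_add]; ring_nf

lemma f_dec (c x y : ℝ) (hc : 0 < c) (hx : 1 / c ≤ x) (hxy : x ≤ y) :
    y * Real.exp (-(c * y)) ≤ x * Real.exp (-(c * x)) := by
  have hx0 : 0 < x := lt_of_lt_of_le (by positivity) hx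
  have hcx : 1 ≤ c * x := by
    have := (div_le_iff₀ hc).1 hx; nlinarith
  have hexp := Real.add_one_le_exp (c * (y - x))
  have h1 : y ≤ x * Real.exp (c * (y - x)) := by
    have h2 : x * (c * (y - x) + 1) ≤ x * Real.exp (c * (y - x)) :=
      mul_le_mul_of_nonneg_left hexp hx0.le
    nlinarith
  calc y * Real.exp (-(c * y)) ≤ (x * Real.exp (c * (y - x))) * Real.exp (-(c * y)) :=
        mul_le_mul_of_nonneg_right h1 (Real.exp_pos _).le
    _ = x * (Real.exp (c * (y - x)) * Real.exp (-(c * y))) := by ring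
    _ = x * Real.exp (-(c * x)) := by rw [← Real.exp_add]; ring_nf

/-- Main theorem -/
theorem optimal_active_device_fraction
    (β r τD lamD aB aD δ : ℝ)
    (hβ : 2 < β) (hr : 0 < r) (hτD : 0 < τD) (hlamD : 0 < lamD)
    (haB : 0 < aB) (haD : 0 < aD) (hδ0 : 0 < δ) (hδ1 : δ < 1)
    (C : ℝ) (hC : C = r ^ 2 * Real.Gamma (1 - 2 / β) * τD ^ (2 / β))
    (D : ℝ → ℝ) (hD : ∀ p : ℝ, D p = p * lamD * Real.exp (-((aB + p * aD) * C)))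
    (p₁ p₂ pstar : ℝ)
    (hp₁ : p₁ = 1 / (aD * C))
    (hp₂ : p₂ = (aB / aD) * (1 / δ - 1))
    (hpstar : pstar = min 1 (min p₁ p₂)) :
    (0 ≤ pstar ∧ pstar ≤ 1) ∧ aB / (aB + pstar * aD) ≥ δ ∧
      ∀ p : ℝ, 0 ≤ p → p ≤ 1 → aB / (aB + p * aD) ≥ δ → D p ≤ D pstar := by
  have hβ0 : (0:ℝ) < β := by linarith
  have hGamma : 0 < Real.Gamma (1 - 2 / β) := by
    apply Real.Gamma_pos_of_pos
    have : 2 / β < 1 := (div_lt_one hβ0).2 hβ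
    linarith
  have hC0 : 0 < C := by
    rw [hC]
    have : (0:ℝ) < τD ^ (2 / β) := Real.rpow_pos_of_pos hτD _
    positivity
  set c := aD * C with hc
  have hc0 : 0 < c := mul_pos haD hC0
  have hp₁pos : 0 < p₁ := by rw [hp₁]; positivity
  have hp₂pos : 0 < p₂ := by
    rw [hp₂]
    have : 1 < 1 / δ := (one_lt_one_div hδ0 hδ1)
    have h1 : 0 < 1 / δ - 1 := by linarith
    positivity
  have hps0 : 0 < pstar := by
    rw [hpstar]; exact lt_min one_pos (lt_min hp₁pos hp₂pos)
  have hps1 : pstar ≤ 1 := by rw [hpstar]; exact min_le_left _ _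
  have hpsp₁ : pstar ≤ p₁ := by
    rw [hpstar]; exact le_trans (min_le_right _ _) (min_le_left _ _)
  have hpsp₂ : pstar ≤ p₂ := by
    rw [hpstar]; exact le_trans (min_le_right _ _) (min_le_right _ _)
  have hp₂key : p₂ * aD * δ = aB * (1 - δ) := by
    rw [hp₂]; field_simp
  -- constraint equivalence for nonneg p
  have hconstr : ∀ p : ℝ, 0 ≤ p → (aB / (aB + p * aD) ≥ δ ↔ p ≤ p₂) := by
    intro p hp
    have hden : 0 < aB + p * aD := by positivity
    rw [ge_iff_le, le_div_iff₀ hden]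
    constructor
    · intro h
      have : p * aD * δ ≤ p₂ * aD * δ := by rw [hp₂key]; nlinarith
      have haDδ : 0 < aD * δ := mul_pos haD hδ0
      nlinarith
    · intro h
      nlinarith [mul_le_mul_of_nonneg_right h (mul_pos haD hδ0).le, hp₂key]
  have hDform : ∀ p : ℝ, D p = lamD * Real.exp (-(aB * C)) * (p * Real.exp (-(c * p))) := by
    intro p
    have harg : -((aB + p * aD) * C) = -(aB * C) + -(c * p) := by rw [hc]; ring
    rw [hD p, harg, Real.exp_add]; ring
  have hp₁c : p₁ = 1 / c := by rw [hp₁, hc]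
  refine ⟨⟨hps0.le, hps1⟩, (hconstr pstar hps0.le).2 hpsp₂, ?_⟩
  intro p hp0 hp1 hpfeas
  have hpp₂ : p ≤ p₂ := (hconstr p hp0).1 hpfeas
  have hconst : 0 ≤ lamD * Real.exp (-(aB * C)) := by positivity
  rw [hDform p, hDform pstar]
  apply mul_le_mul_of_nonneg_left _ hconst
  rcases le_total p p₁ with h | h
  · -- p ≤ p₁ ⟹ p ≤ pstar, increasing region
    have hpps : p ≤ pstar := by
      rw [hpstar]; exact le_min hp1 (le_min h hpp₂)
    exact f_inc c p pstar hc0 hp0 hpps (by rw [← hp₁c]; exact hpsp₁)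
  · -- p₁ ≤ p ⟹ pstar = p₁, decreasing region
    have hps_eq : pstar = p₁ := by
      rw [hpstar, min_eq_left (le_trans h hpp₂), min_eq_right (le_trans h hp1)]
    rw [hps_eq]
    exact f_dec c p₁ p hc0 (le_of_eq hp₁c.symm) h
end

section
/- Let β>2, κ>0 and ξ>0. Then the function x ↦ 1 − 1/(1 + ξ·(κ·‖x‖)^{−β}) is integrable on ℝ² (with respect to two-dimensional Lebesgue measure) and ∫_{ℝ²} (1 − 1/(1 + ξ·(κ·‖x‖)^{−β})) dx = (π/κ²)·ξ^{2/β}·Γ(1−2/β)·Γ(1+2/β). (The Laplace-functional integral over the plane which yields the Laplace transform exp(−λ·(π/κ²)·Γ(1−2/β)·Γ(1+2/β)·ξ^{2/β}) of the total interference from a Poisson field of density λ of Rayleigh-faded transmitters.) -/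
/-!
In polar coordinates the integral becomes `2π ∫₀^∞ r / (1 + b r^β) dr` with `b = κ^β / ξ`.
Writing `1 / (1 + a) = ∫₀^∞ e^{-(1 + a) y} dy` and exchanging the two integrals (Tonelli), the
inner `r`-integral is a Gamma integral proportional to `e^{-y} y^{-2/β}`, and the outer
`y`-integral is then `Γ(1 - 2/β)`.
-/

open Real MeasureTheory Set

section OfReal

variable {α : Type*} [MeasurableSpace α] {μ : Measure α} {s : Set α} {f : α → ℝ} {c : ℝ}

lemma setLIntegral_ofReal_eq_of_setIntegral_eq (hs : MeasurableSet s) (hf : IntegrableOn f s μ)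
    (hnn : ∀ x ∈ s, 0 ≤ f x) (h : ∫ x in s, f x ∂μ = c) :
    ∫⁻ x in s, ENNReal.ofReal (f x) ∂μ = ENNReal.ofReal c := by
  rw [← h, ofReal_integral_eq_lintegral_ofReal hf ((ae_restrict_iff' hs).2 (ae_of_all _ hnn))]

lemma integrableOn_and_setIntegral_eq_of_setLIntegral_ofReal_eq (hs : MeasurableSet s)
    (hf : AEStronglyMeasurable f (μ.restrict s)) (hnn : ∀ x ∈ s, 0 ≤ f x) (hc : 0 ≤ c)
    (h : ∫⁻ x in s, ENNReal.ofReal (f x) ∂μ = ENNReal.ofReal c) :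
    IntegrableOn f s μ ∧ ∫ x in s, f x ∂μ = c := by
  have hnn' : 0 ≤ᵐ[μ.restrict s] f := (ae_restrict_iff' hs).2 (ae_of_all _ hnn)
  refine ⟨⟨hf, (hasFiniteIntegral_iff_ofReal hnn').2 (h ▸ ENNReal.ofReal_lt_top)⟩, ?_⟩
  rw [integral_eq_lintegral_of_nonneg_ae hnn' hf, h, ENNReal.toReal_ofReal hc]

end OfReal

lemma integrableOn_and_integral_exp_neg_mul_Ioi {a : ℝ} (ha : 0 < a) :
    IntegrableOn (fun y => exp (-a * y)) (Ioi 0) ∧ ∫ y in Ioi (0 : ℝ), exp (-a * y) = a⁻¹ := by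
  refine ⟨exp_neg_integrableOn_Ioi 0 ha, ?_⟩
  rw [integral_exp_mul_Ioi (by linarith) 0]
  simp [div_neg, neg_div]

theorem lintegral_rpow_div_one_add_mul_rpow {p q b : ℝ} (hq : -1 < q) (hqp : q + 1 < p)
    (hb : 0 < b) :
    ∫⁻ t in Ioi 0, ENNReal.ofReal (t ^ q / (1 + b * t ^ p)) =
      ENNReal.ofReal (b ^ (-(q + 1) / p) * (1 / p) * Gamma ((q + 1) / p) *
        Gamma (1 - (q + 1) / p)) := by
  have hp : 0 < p := by linarith
  set C := b ^ (-(q + 1) / p) * (1 / p) * Gamma ((q + 1) / p)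
  have hC : 0 ≤ C := by
    have := Gamma_pos_of_pos (show 0 < (q + 1) / p from div_pos (by linarith) hp)
    positivity
  have h_inv : ∀ t ∈ Ioi (0 : ℝ), ENNReal.ofReal (t ^ q / (1 + b * t ^ p)) =
      ∫⁻ y in Ioi 0, ENNReal.ofReal (t ^ q * exp (-(1 + b * t ^ p) * y)) := by
    intro t (ht : 0 < t)
    obtain ⟨hint, hval⟩ :=
      integrableOn_and_integral_exp_neg_mul_Ioi (a := 1 + b * t ^ p) (by positivity)
    refine (setLIntegral_ofReal_eq_of_setIntegral_eq measurableSet_Ioi (hint.const_mul _)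
      (fun y _ => by positivity) ?_).symm
    rw [integral_const_mul, hval, div_eq_mul_inv]
  have h_inner : ∀ y ∈ Ioi (0 : ℝ),
      ∫⁻ t in Ioi 0, ENNReal.ofReal (t ^ q * exp (-(1 + b * t ^ p) * y)) =
        ENNReal.ofReal (C * (exp (-y) * y ^ (1 - (q + 1) / p - 1))) := by
    intro y (hy : 0 < y)
    have hsplit : ∀ t, t ^ q * exp (-(1 + b * t ^ p) * y) =
        exp (-y) * (t ^ q * exp (-(b * y) * t ^ p)) := by
      intro t
      rw [mul_left_comm, ← exp_add]
      ring_nf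
    simp_rw [hsplit]
    refine setLIntegral_ofReal_eq_of_setIntegral_eq measurableSet_Ioi
      ((integrableOn_rpow_mul_exp_neg_mul_rpow hq hp (by positivity)).const_mul _)
      (fun t (ht : 0 < t) => by positivity) ?_
    rw [integral_const_mul, integral_rpow_mul_exp_neg_mul_rpow hp hq (by positivity),
      mul_rpow hb.le hy.le, show 1 - (q + 1) / p - 1 = -(q + 1) / p by ring]
    ring
  have hs : 0 < 1 - (q + 1) / p := by rw [sub_pos, div_lt_one hp]; exact hqp
  calc ∫⁻ t in Ioi 0, ENNReal.ofReal (t ^ q / (1 + b * t ^ p))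
      = ∫⁻ y in Ioi 0, ∫⁻ t in Ioi 0, ENNReal.ofReal (t ^ q * exp (-(1 + b * t ^ p) * y)) := by
        rw [setLIntegral_congr_fun measurableSet_Ioi h_inv]
        exact lintegral_lintegral_swap (by fun_prop)
    _ = ∫⁻ y in Ioi 0, ENNReal.ofReal (C * (exp (-y) * y ^ (1 - (q + 1) / p - 1))) :=
        setLIntegral_congr_fun measurableSet_Ioi h_inner
    _ = ENNReal.ofReal (C * Gamma (1 - (q + 1) / p)) :=
        setLIntegral_ofReal_eq_of_setIntegral_eq measurableSet_Ioi
          ((GammaIntegral_convergent hs).const_mul C) (fun y (hy : 0 < y) => by positivity)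
          (by rw [integral_const_mul, Gamma_eq_integral hs])

theorem integrableOn_and_integral_rpow_div_one_add_mul_rpow {p q b : ℝ} (hq : -1 < q)
    (hqp : q + 1 < p) (hb : 0 < b) :
    IntegrableOn (fun t => t ^ q / (1 + b * t ^ p)) (Ioi 0) ∧
      ∫ t in Ioi 0, t ^ q / (1 + b * t ^ p) =
        b ^ (-(q + 1) / p) * (1 / p) * Gamma ((q + 1) / p) * Gamma (1 - (q + 1) / p) := by
  have hp : 0 < p := by linarith
  have hΓ₁ := Gamma_pos_of_pos (show 0 < (q + 1) / p from div_pos (by linarith) hp)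
  have hΓ₂ := Gamma_pos_of_pos (show 0 < 1 - (q + 1) / p by rw [sub_pos, div_lt_one hp]; exact hqp)
  exact integrableOn_and_setIntegral_eq_of_setLIntegral_ofReal_eq measurableSet_Ioi
    (Measurable.aestronglyMeasurable (by fun_prop)) (fun t (ht : 0 < t) => by positivity)
    (by positivity) (lintegral_rpow_div_one_add_mul_rpow hq hqp hb)

lemma one_sub_one_div_one_add_mul_rpow_neg {β κ ξ r : ℝ} (hκ : 0 < κ) (hξ : 0 < ξ)
    (hr : 0 < r) :
    1 - 1 / (1 + ξ * (κ * r) ^ (-β)) = 1 / (1 + ξ⁻¹ * κ ^ β * r ^ β) := by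
  rw [rpow_neg (by positivity), mul_assoc ξ⁻¹, ← mul_rpow hκ.le hr.le]
  field_simp
  ring

/-- The Laplace-functional integral over the plane which yields the Laplace
transform of the total interference from a Poisson field of Rayleigh-faded
transmitters: for `β > 2`, `κ > 0`, `ξ > 0`, the function
`x ↦ 1 − 1/(1 + ξ·(κ‖x‖)^{−β})` is integrable on `ℝ²` and its integral equals
`(π/κ²)·ξ^{2/β}·Γ(1−2/β)·Γ(1+2/β)`. -/
theorem laplace_functional_plane_integral
    (β κ ξ : ℝ) (hβ : 2 < β) (hκ : 0 < κ) (hξ : 0 < ξ) :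
    Integrable (fun x : EuclideanSpace ℝ (Fin 2) =>
        1 - 1 / (1 + ξ * (κ * ‖x‖) ^ (-β))) ∧
    ∫ x : EuclideanSpace ℝ (Fin 2), (1 - 1 / (1 + ξ * (κ * ‖x‖) ^ (-β))) =
      (π / κ ^ 2) * ξ ^ (2 / β) * Real.Gamma (1 - 2 / β) *
        Real.Gamma (1 + 2 / β) := by
  have hβ0 : 0 < β := by linarith
  set f : ℝ → ℝ := fun r => 1 - 1 / (1 + ξ * (κ * r) ^ (-β))
  have hradial : EqOn (fun r => r ^ (2 - 1) • f r)
      (fun r => r ^ (1 : ℝ) / (1 + ξ⁻¹ * κ ^ β * r ^ β)) (Ioi 0) := fun r (hr : 0 < r) => by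
    simp only [f, one_sub_one_div_one_add_mul_rpow_neg hκ hξ hr]
    simp [div_eq_mul_inv]
  obtain ⟨hint, hval⟩ := integrableOn_and_integral_rpow_div_one_add_mul_rpow (p := β) (q := 1)
    (by norm_num) (by linarith) (show 0 < ξ⁻¹ * κ ^ β by positivity)
  refine ⟨?_, ?_⟩
  · rw [integrable_fun_norm_addHaar volume (f := f), finrank_euclideanSpace_fin]
    exact hint.congr_fun hradial.symm measurableSet_Ioi
  · rw [integral_fun_norm_addHaar volume f, finrank_euclideanSpace_fin,
      setIntegral_congr_fun measurableSet_Ioi hradial, hval, measureReal_def,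
      EuclideanSpace.volume_ball_fin_two]
    have hscale : (ξ⁻¹ * κ ^ β) ^ (-(1 + 1) / β) = ξ ^ (2 / β) / κ ^ 2 := by
      rw [mul_rpow (by positivity) (by positivity), inv_rpow hξ.le, ← rpow_mul hκ.le,
        ← rpow_neg hξ.le, show β * (-(1 + 1) / β) = -2 by field_simp; norm_num,
        show -(-(1 + 1) / β) = 2 / β by ring, rpow_neg hκ.le, rpow_two]
      rfl
    have hΓ : Gamma (1 + 2 / β) = 2 / β * Gamma (2 / β) := by
      rw [add_comm, Gamma_add_one (by positivity)]
    rw [hscale, hΓ]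
    simp only [ENNReal.ofReal_one, one_pow, one_mul, ENNReal.toReal_ofReal pi_nonneg,
      nsmul_eq_mul, smul_eq_mul]
    norm_num
    ring
end
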